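/- The density over the shrinkage factor κ ∈ (0,1) induced by a log-t prior, p_t(κ|α,ψ) ∝ κ^{−1}(1−κ)^{−1}(1 + atanh(1−2κ)²/(αψ²))^{−(α+1)/2}, diverges at both endpoints: lim_{κ→0⁺} p_t(κ|α,ψ) = ∞ and lim_{κ→1⁻} p_t(κ|α,ψ) = ∞, for all α > 0 and ψ > 0. -/

import Mathlib

/-!
With `u = atanh (1 - 2κ)` one has `e^{2u} = (1 - κ)/κ ≤ κ⁻¹(1 - κ)⁻¹`, and `u → ∞` as
`κ → 0⁺`. So the density is at least `e^{2u} (1 + u²/(αψ²))^{-(α+1)/2}`, an exponential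
against a mere power of `u`, which tends to infinity. The density is invariant under
`κ ↦ 1 - κ` (that map sends `u` to `-u`), which turns the limit at `0⁺` into the limit
at `1⁻`.
-/

open Real Filter

noncomputable def atanh (x : ℝ) : ℝ := (1 / 2) * Real.log ((1 + x) / (1 - x))

open Set Topology

theorem atanh_neg (x : ℝ) : atanh (-x) = -atanh x := by
  rw [atanh, atanh, ← mul_neg, ← log_inv, inv_div, sub_neg_eq_add, ← sub_eq_add_neg]

theorem exp_two_mul_atanh {x : ℝ} (h₁ : -1 < x) (h₂ : x < 1) :
    exp (2 * atanh x) = (1 + x) / (1 - x) := by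
  rw [atanh, ← mul_assoc, mul_one_div_cancel two_ne_zero, one_mul,
    exp_log (div_pos (by linarith) (by linarith))]

theorem tendsto_one_sub_nhdsLT_one : Tendsto (fun x : ℝ => 1 - x) (𝓝[<] 1) (𝓝[>] 0) := by
  have h_maps : MapsTo (fun x : ℝ => 1 - x) (Iio 1) (Ioi 0) := fun x (hx : x < 1) => by
    simpa using hx
  simpa using
    ((continuous_sub_left (1 : ℝ)).continuousWithinAt (x := 1)).tendsto_nhdsWithin h_maps

theorem tendsto_one_sub_two_mul_nhdsGT_zero :
    Tendsto (fun x : ℝ => 1 - 2 * x) (𝓝[>] 0) (𝓝[<] 1) := by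
  have h_maps : MapsTo (fun x : ℝ => 1 - 2 * x) (Ioi 0) (Iio 1) := fun x (hx : 0 < x) => by
    simpa using hx
  have h_cont : Continuous fun x : ℝ => 1 - 2 * x := by fun_prop
  simpa using (h_cont.continuousWithinAt (x := 0)).tendsto_nhdsWithin h_maps

theorem tendsto_atanh_nhdsLT_one : Tendsto atanh (𝓝[<] 1) atTop := by
  have h_num : Tendsto (fun x : ℝ => 1 + x) (𝓝[<] 1) (𝓝 2) :=
    tendsto_nhdsWithin_of_tendsto_nhds
      (by simpa [one_add_one_eq_two] using (continuous_const_add (1 : ℝ)).tendsto 1)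
  have h_ratio :=
    h_num.pos_mul_atTop two_pos (tendsto_inv_nhdsGT_zero.comp tendsto_one_sub_nhdsLT_one)
  exact (tendsto_log_atTop.comp h_ratio).const_mul_atTop one_half_pos

theorem tendsto_exp_mul_mul_one_add_sq_div_rpow_atTop {b s q : ℝ} (hb : 0 < b) (hs : 0 ≤ s)
    (hq : q ≤ 0) : Tendsto (fun u => exp (b * u) * (1 + u ^ 2 / s) ^ q) atTop atTop := by
  set C := 1 + s⁻¹
  have hC : 0 < C := by positivity
  refine tendsto_atTop_mono' atTop ?_
    ((tendsto_exp_mul_div_rpow_atTop (-(2 * q)) b hb).const_mul_atTop (rpow_pos_of_pos hC q))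
  filter_upwards [eventually_ge_atTop 1] with u hu
  have hu₀ : 0 < u := one_pos.trans_le hu
  -- with the convention `0⁻¹ = 0` this also covers `s = 0`
  have h_base : 1 + u ^ 2 / s ≤ C * u ^ 2 := by
    have : 1 ≤ u ^ 2 := one_le_pow₀ hu
    rw [div_eq_mul_inv]
    nlinarith [mul_nonneg (sq_nonneg u) (inv_nonneg.2 hs)]
  calc C ^ q * (exp (b * u) / u ^ (-(2 * q)))
      = exp (b * u) * (C * u ^ 2) ^ q := by
        rw [mul_rpow hC.le (by positivity), ← rpow_natCast_mul hu₀.le, rpow_neg hu₀.le,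
          div_inv_eq_mul]
        push_cast
        ring
    _ ≤ exp (b * u) * (1 + u ^ 2 / s) ^ q :=
        mul_le_mul_of_nonneg_left (rpow_le_rpow_of_nonpos (by positivity) h_base hq)
          (exp_pos _).le

/-- The log-t shrinkage density up to its normalising constant, with `s = αψ²` and
`q = -(α + 1)/2`. -/
noncomputable def kappaDensity (s q κ : ℝ) : ℝ :=
  κ⁻¹ * (1 - κ)⁻¹ * (1 + atanh (1 - 2 * κ) ^ 2 / s) ^ q

theorem kappaDensity_one_sub (s q κ : ℝ) : kappaDensity s q (1 - κ) = kappaDensity s q κ := by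
  rw [kappaDensity, kappaDensity, sub_sub_cancel, mul_comm (1 - κ)⁻¹,
    show 1 - 2 * (1 - κ) = -(1 - 2 * κ) by ring, atanh_neg, neg_sq]

theorem exp_two_mul_atanh_one_sub_two_mul_le {κ : ℝ} (h₀ : 0 < κ) (h₁ : κ < 1) :
    exp (2 * atanh (1 - 2 * κ)) ≤ κ⁻¹ * (1 - κ)⁻¹ := by
  rw [exp_two_mul_atanh (by linarith) (by linarith), div_le_iff₀ (by linarith), ← mul_inv,
    ← one_div, div_mul_eq_mul_div, le_div_iff₀ (by nlinarith)]
  nlinarith [mul_pos h₀ h₀]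

theorem tendsto_kappaDensity_nhdsGT_zero {s q : ℝ} (hs : 0 ≤ s) (hq : q ≤ 0) :
    Tendsto (kappaDensity s q) (𝓝[>] 0) atTop := by
  have h_lower := (tendsto_exp_mul_mul_one_add_sq_div_rpow_atTop two_pos hs hq).comp
    (tendsto_atanh_nhdsLT_one.comp tendsto_one_sub_two_mul_nhdsGT_zero)
  refine tendsto_atTop_mono' _ ?_ h_lower
  filter_upwards [Ioo_mem_nhdsGT one_pos] with κ ⟨h₀, h₁⟩
  exact mul_le_mul_of_nonneg_right (exp_two_mul_atanh_one_sub_two_mul_le h₀ h₁) (by positivity)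

theorem tendsto_kappaDensity_nhdsLT_one {s q : ℝ} (hs : 0 ≤ s) (hq : q ≤ 0) :
    Tendsto (kappaDensity s q) (𝓝[<] 1) atTop := by
  simpa only [Function.comp_def, kappaDensity_one_sub] using
    (tendsto_kappaDensity_nhdsGT_zero hs hq).comp tendsto_one_sub_nhdsLT_one

theorem log_t_kappa_density_diverges (α ψ c : ℝ)
    (hα : 0 < α) (hc : 0 < c) :
    Tendsto
      (fun κ : ℝ => c * (κ⁻¹ * (1 - κ)⁻¹ *
        (1 + (atanh (1 - 2 * κ)) ^ 2 / (α * ψ ^ 2)) ^ (-(α + 1) / 2)))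
      (nhdsWithin 0 (Set.Ioi 0)) atTop ∧
    Tendsto
      (fun κ : ℝ => c * (κ⁻¹ * (1 - κ)⁻¹ *
        (1 + (atanh (1 - 2 * κ)) ^ 2 / (α * ψ ^ 2)) ^ (-(α + 1) / 2)))
      (nhdsWithin 1 (Set.Iio 1)) atTop := by
  have hs : 0 ≤ α * ψ ^ 2 := by positivity
  have hq : -(α + 1) / 2 ≤ 0 := by linarith
  exact ⟨(tendsto_kappaDensity_nhdsGT_zero hs hq).const_mul_atTop hc,
    (tendsto_kappaDensity_nhdsLT_one hs hq).const_mul_atTop hc⟩
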